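/- arXiv:1007.3485 — 3 statements merged into one kernel-verified Lean document; each statement's English description precedes it below -/
import Mathlib

section
/- On V = W ⊕ W* with canonical pairing, let g be a positive-definite inner product on W and I₊, I₋ complex structures on W orthogonal for g, with ω± := g∘I± the associated 2-forms. Define J₁ = ½ [[I₊+I₋, −(ω₊⁻¹−ω₋⁻¹)],[ω₊−ω₋, −(I₊*+I₋*)]] and J₂ = ½ [[I₊−I₋, −(ω₊⁻¹+ω₋⁻¹)],[ω₊+ω₋, −(I₊*−I₋*)]] (as block endomorphisms of W ⊕ W*). Then J₁ and J₂ are orthogonal complex structures on V, they commute, and −J₁J₂ is positive-definite; i.e., (J₁, J₂) is a (linear) generalized Kähler structure. -/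
/- The reconstruction of a linear generalized Kähler pair from bi-Hermitian data
`(g, I₊, I₋)`: on `V = W ⊕ W*` with the canonical pairing, using `ω± = g I±` and
`ω±⁻¹ = −I± g⁻¹`, define the block endomorphisms
`J₁ = ½ [[I₊+I₋, −(ω₊⁻¹−ω₋⁻¹)],[ω₊−ω₋, −(I₊*+I₋*)]]` and
`J₂ = ½ [[I₊−I₋, −(ω₊⁻¹+ω₋⁻¹)],[ω₊+ω₋, −(I₊*−I₋*)]]`. -/

noncomputable section

open Module

/-- The canonical pairing on `W ⊕ W*`. -/
def pairV {W : Type*} [AddCommGroup W] [Module ℝ W]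
    (a b : W × Module.Dual ℝ W) : ℝ :=
  (1/2) * (a.2 b.1 + b.2 a.1)

variable {W : Type*} [AddCommGroup W] [Module ℝ W]

/-- `J₁`, using `−(ω₊⁻¹ − ω₋⁻¹) = I₊ g⁻¹ − I₋ g⁻¹`. -/
def Jone (g : W →ₗ[ℝ] Module.Dual ℝ W) (ginv : Module.Dual ℝ W →ₗ[ℝ] W)
    (Ip Im : W →ₗ[ℝ] W) : W × Module.Dual ℝ W → W × Module.Dual ℝ W := fun a =>
  ((1/2 : ℝ) • (Ip a.1 + Im a.1 + (Ip (ginv a.2) - Im (ginv a.2))),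
   (1/2 : ℝ) • (g (Ip a.1) - g (Im a.1) - (Ip.dualMap a.2 + Im.dualMap a.2)))

/-- `J₂`, using `−(ω₊⁻¹ + ω₋⁻¹) = I₊ g⁻¹ + I₋ g⁻¹`. -/
def Jtwo (g : W →ₗ[ℝ] Module.Dual ℝ W) (ginv : Module.Dual ℝ W →ₗ[ℝ] W)
    (Ip Im : W →ₗ[ℝ] W) : W × Module.Dual ℝ W → W × Module.Dual ℝ W := fun a =>
  ((1/2 : ℝ) • (Ip a.1 - Im a.1 + (Ip (ginv a.2) + Im (ginv a.2))),
   (1/2 : ℝ) • (g (Ip a.1) + g (Im a.1) - (Ip.dualMap a.2 - Im.dualMap a.2)))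

/-- `(J₁, J₂)` is a linear generalized Kähler structure: they are
orthogonal complex structures on `W ⊕ W*`, they commute, and `−J₁J₂` is
positive-definite. -/
theorem biHermitian_reconstruction
    (g : W →ₗ[ℝ] Module.Dual ℝ W) (ginv : Module.Dual ℝ W →ₗ[ℝ] W)
    (Ip Im : W →ₗ[ℝ] W)
    (hgsym : ∀ X Y, g X Y = g Y X)
    (hgpos : ∀ X, X ≠ 0 → 0 < g X X)
    (hginv₁ : ∀ X, ginv (g X) = X)
    (hginv₂ : ∀ ξ, g (ginv ξ) = ξ)
    (hIp2 : ∀ X, Ip (Ip X) = -X)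
    (hIm2 : ∀ X, Im (Im X) = -X)
    (hIpo : ∀ X Y, g (Ip X) (Ip Y) = g X Y)
    (hImo : ∀ X Y, g (Im X) (Im Y) = g X Y) :
    (∀ a, Jone g ginv Ip Im (Jone g ginv Ip Im a) = -a) ∧
    (∀ a, Jtwo g ginv Ip Im (Jtwo g ginv Ip Im a) = -a) ∧
    (∀ a b, pairV (Jone g ginv Ip Im a) (Jone g ginv Ip Im b) = pairV a b) ∧
    (∀ a b, pairV (Jtwo g ginv Ip Im a) (Jtwo g ginv Ip Im b) = pairV a b) ∧
    (∀ a, Jone g ginv Ip Im (Jtwo g ginv Ip Im a) = Jtwo g ginv Ip Im (Jone g ginv Ip Im a)) ∧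
    (∀ a, a ≠ 0 → 0 < pairV (Jone g ginv Ip Im a) (Jtwo g ginv Ip Im a)) := by
  have skp : ∀ X Y, g (Ip X) Y = -(g X (Ip Y)) := by
    intro X Y
    have h := hIpo X (Ip Y)
    rw [hIp2 Y, map_neg] at h
    linarith [LinearMap.neg_apply (g (Ip X)) Y]
  have skm : ∀ X Y, g (Im X) Y = -(g X (Im Y)) := by
    intro X Y
    have h := hImo X (Im Y)
    rw [hIm2 Y, map_neg] at h
    linarith [LinearMap.neg_apply (g (Im X)) Y]
  have dIp : ∀ x, Ip.dualMap (g x) = -(g (Ip x)) := by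
    intro x
    ext y
    simp [LinearMap.dualMap_apply, skp]
  have dIm : ∀ x, Im.dualMap (g x) = -(g (Im x)) := by
    intro x
    ext y
    simp [LinearMap.dualMap_apply, skm]
  have JoneEq : ∀ X Y, Jone g ginv Ip Im (X, g Y) =
      ((1/2 : ℝ) • (Ip X + Im X + (Ip Y - Im Y)),
       g ((1/2 : ℝ) • (Ip X - Im X + (Ip Y + Im Y)))) := by
    intro X Y
    simp only [Jone, hginv₁, dIp, dIm, map_add, map_sub, map_smul, map_neg]
    refine Prod.ext rfl ?_
    show _ = (_ : Dual ℝ W)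
    module
  have JtwoEq : ∀ X Y, Jtwo g ginv Ip Im (X, g Y) =
      ((1/2 : ℝ) • (Ip X - Im X + (Ip Y + Im Y)),
       g ((1/2 : ℝ) • (Ip X + Im X + (Ip Y - Im Y)))) := by
    intro X Y
    simp only [Jtwo, hginv₁, dIp, dIm, map_add, map_sub, map_smul, map_neg]
    refine Prod.ext rfl ?_
    show _ = (_ : Dual ℝ W)
    module
  have sq1 : ∀ X Y, Jone g ginv Ip Im (Jone g ginv Ip Im (X, g Y)) = -(X, g Y) := by
    intro X Y
    rw [JoneEq, JoneEq]
    refine Prod.ext ?_ ?_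
    · simp only [map_smul, map_add, map_sub, hIp2, hIm2, Prod.fst_neg]
      module
    · show g _ = _
      rw [Prod.snd_neg, ← map_neg g]
      congr 1
      simp only [map_smul, map_add, map_sub, hIp2, hIm2]
      module
  have sq2 : ∀ X Y, Jtwo g ginv Ip Im (Jtwo g ginv Ip Im (X, g Y)) = -(X, g Y) := by
    intro X Y
    rw [JtwoEq, JtwoEq]
    refine Prod.ext ?_ ?_
    · simp only [map_smul, map_add, map_sub, hIp2, hIm2, Prod.fst_neg]
      module
    · show g _ = _
      rw [Prod.snd_neg, ← map_neg g]
      congr 1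
      simp only [map_smul, map_add, map_sub, hIp2, hIm2]
      module
  have comm : ∀ X Y, Jone g ginv Ip Im (Jtwo g ginv Ip Im (X, g Y)) =
      Jtwo g ginv Ip Im (Jone g ginv Ip Im (X, g Y)) := by
    intro X Y
    rw [JoneEq, JtwoEq, JoneEq, JtwoEq]
    refine Prod.ext ?_ ?_
    · show _ = (_ : W)
      module
    · show g _ = g _
      congr 1
      module
  have key1 : ∀ X Y X' Y' : W,
      g (Ip X - Im X + (Ip Y + Im Y)) (Ip X' + Im X' + (Ip Y' - Im Y')) +
      g (Ip X' - Im X' + (Ip Y' + Im Y')) (Ip X + Im X + (Ip Y - Im Y)) =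
      4 * (g Y X' + g Y' X) := by
    intro X Y X' Y'
    simp only [map_add, map_sub, LinearMap.add_apply, LinearMap.sub_apply]
    linear_combination (hIpo X X') - (hImo X X') - (hIpo X Y') + (hImo X Y')
      + 3*(hIpo Y X') + (hImo Y X') + (hIpo Y Y') - (hImo Y Y')
      + (hIpo X' X) - (hImo X' X) - (hIpo X' Y) + (hImo X' Y)
      + 3*(hIpo Y' X) + (hImo Y' X) + (hIpo Y' Y) - (hImo Y' Y)
      + 2*(hgsym (Ip X) (Ip Y')) + 2*(hgsym (Ip X') (Ip Y))
      - (hgsym (Im X) (Ip X')) - (hgsym (Im X) (Ip Y'))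
      + (hgsym (Im Y) (Ip X')) + (hgsym (Im Y) (Ip Y'))
      - (hgsym (Im X') (Ip X)) - (hgsym (Im X') (Ip Y))
      + (hgsym (Im Y') (Ip X)) + (hgsym (Im Y') (Ip Y))
  have key2 : ∀ X Y X' Y' : W,
      g (Ip X + Im X + (Ip Y - Im Y)) (Ip X' - Im X' + (Ip Y' + Im Y')) +
      g (Ip X' + Im X' + (Ip Y' - Im Y')) (Ip X - Im X + (Ip Y + Im Y)) =
      4 * (g Y X' + g Y' X) := by
    intro X Y X' Y'
    simp only [map_add, map_sub, LinearMap.add_apply, LinearMap.sub_apply]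
    linear_combination (hIpo X X') - (hImo X X') - (hIpo X Y') + (hImo X Y')
      + 3*(hIpo Y X') + (hImo Y X') + (hIpo Y Y') - (hImo Y Y')
      + (hIpo X' X) - (hImo X' X) - (hIpo X' Y) + (hImo X' Y)
      + 3*(hIpo Y' X) + (hImo Y' X) + (hIpo Y' Y) - (hImo Y' Y)
      + 2*(hgsym (Ip X) (Ip Y')) + 2*(hgsym (Ip X') (Ip Y))
      + (hgsym (Im X) (Ip X')) + (hgsym (Im X) (Ip Y'))
      - (hgsym (Im Y) (Ip X')) - (hgsym (Im Y) (Ip Y'))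
      + (hgsym (Im X') (Ip X)) + (hgsym (Im X') (Ip Y))
      - (hgsym (Im Y') (Ip X)) - (hgsym (Im Y') (Ip Y))
  have keypos : ∀ X Y : W,
      g (Ip X - Im X + (Ip Y + Im Y)) (Ip X - Im X + (Ip Y + Im Y)) +
      g (Ip X + Im X + (Ip Y - Im Y)) (Ip X + Im X + (Ip Y - Im Y)) =
      4 * (g X X + g Y Y) := by
    intro X Y
    simp only [map_add, map_sub, LinearMap.add_apply, LinearMap.sub_apply]
    linear_combination 2*(hIpo X X) + 2*(hImo X X) + 2*(hIpo X Y) - 2*(hImo X Y)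
      + 2*(hIpo Y X) - 2*(hImo Y X) + 2*(hIpo Y Y) + 2*(hImo Y Y)
  have pair1 : ∀ X Y X' Y', pairV (Jone g ginv Ip Im (X, g Y)) (Jone g ginv Ip Im (X', g Y'))
      = pairV (X, g Y) (X', g Y') := by
    intro X Y X' Y'
    rw [JoneEq, JoneEq]
    simp only [pairV, map_smul, LinearMap.smul_apply, smul_eq_mul]
    linear_combination (1/8 : ℝ) * key1 X Y X' Y'
  have pair2 : ∀ X Y X' Y', pairV (Jtwo g ginv Ip Im (X, g Y)) (Jtwo g ginv Ip Im (X', g Y'))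
      = pairV (X, g Y) (X', g Y') := by
    intro X Y X' Y'
    rw [JtwoEq, JtwoEq]
    simp only [pairV, map_smul, LinearMap.smul_apply, smul_eq_mul]
    linear_combination (1/8 : ℝ) * key2 X Y X' Y'
  have pospair : ∀ X Y, pairV (Jone g ginv Ip Im (X, g Y)) (Jtwo g ginv Ip Im (X, g Y))
      = (1/2 : ℝ) * (g X X + g Y Y) := by
    intro X Y
    rw [JoneEq, JtwoEq]
    simp only [pairV, map_smul, LinearMap.smul_apply, smul_eq_mul]
    linear_combination (1/8 : ℝ) * keypos X Y
  have hge : ∀ X : W, 0 ≤ g X X := by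
    intro X
    by_cases hX : X = 0
    · simp [hX]
    · exact (hgpos X hX).le
  refine ⟨?_, ?_, ?_, ?_, ?_, ?_⟩
  · intro a
    have h := sq1 a.1 (ginv a.2)
    rw [hginv₂] at h
    exact h
  · intro a
    have h := sq2 a.1 (ginv a.2)
    rw [hginv₂] at h
    exact h
  · intro a b
    have h := pair1 a.1 (ginv a.2) b.1 (ginv b.2)
    simp only [hginv₂] at h
    exact h
  · intro a b
    have h := pair2 a.1 (ginv a.2) b.1 (ginv b.2)
    simp only [hginv₂] at h
    exact h
  · intro a
    have h1 := comm a.1 (ginv a.2)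
    rw [hginv₂] at h1
    exact h1
  · intro a ha
    have h := pospair a.1 (ginv a.2)
    rw [hginv₂] at h
    rw [h]
    have hr : a.2 (ginv a.2) = g (ginv a.2) (ginv a.2) := by rw [hginv₂]
    rcases eq_or_ne a.1 0 with hX | hX
    · have hxi : a.2 ≠ 0 := by
        intro hxi
        exact ha (Prod.ext hX hxi)
      have hY : ginv a.2 ≠ 0 := by
        intro hY
        apply hxi
        rw [← hginv₂ a.2, hY, map_zero]
      have := hgpos _ hY
      have := hge a.1
      rw [hr]
      linarith
    · have := hgpos _ hX
      have := hge (ginv a.2)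
      rw [hr]
      linarith
end
end

section
/- Let I± be integrable complex structures on a manifold M, Hermitian with respect to a metric g, with ω± = gI±, and let H be a closed 3-form. Then the subbundle ℓ₊ = {X − iω₊X : X ∈ T^{1,0}_+ M} of (TM ⊕ T*M) ⊗ ℂ is involutive for the H-twisted Courant bracket if and only if H^{(2,1)_+} = −i ∂₊ω₊, equivalently d^c_+ ω₊ = H (where d^c_+ = i(∂̄₊ − ∂₊)). -/
/- Complexified Courant calculus: complex vector fields are derivations of a commutative
`ℂ`-algebra `R` (the complexified smooth functions), forms are `R`-valued.  The `(1,0)`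
tangent bundle `T^{1,0}_+ M` of the integrable complex structure `I₊` is modelled by an
`R`-submodule `V10` of the derivations closed under the Lie bracket.  The `H`-twisted
Courant bracket is `[X+ξ, Y+η]_H = [X,Y] + L_X η − i_Y dξ + i_X i_Y H` (with the
convention `(i_X i_Y H)(Z) = H(Y,X,Z)`).  The subbundle
`ℓ₊ = {X − iω₊X : X ∈ T^{1,0}_+}` is involutive for `[·,·]_H` iff
`(H + i dω₊)(X,Y,·) = 0` for `X, Y ∈ T^{1,0}_+`, i.e. `H^{(2,1)_+} = −i ∂₊ω₊`,
equivalently `d^c_+ ω₊ = H`. -/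

noncomputable section

variable {R : Type*} [CommRing R] [Algebra ℂ R]

/-- The `H`-twisted Courant bracket on sections of `(TM ⊕ T*M) ⊗ ℂ`. -/
def courantH (H : Derivation ℂ R R → Derivation ℂ R R → Derivation ℂ R R → R)
    (a b : Derivation ℂ R R × (Derivation ℂ R R → R)) :
    Derivation ℂ R R × (Derivation ℂ R R → R) :=
  (⁅a.1, b.1⁆, fun Z =>
    (a.1 (b.2 Z) - b.2 ⁅a.1, Z⁆) -
      (b.1 (a.2 Z) - Z (a.2 b.1) - a.2 ⁅b.1, Z⁆) + H b.1 a.1 Z)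

/-- The exterior derivative of a 2-form. -/
def dTwo (ω : Derivation ℂ R R → Derivation ℂ R R → R) :
    Derivation ℂ R R → Derivation ℂ R R → Derivation ℂ R R → R := fun X Y Z =>
  X (ω Y Z) - Y (ω X Z) + Z (ω X Y) - ω ⁅X, Y⁆ Z + ω ⁅X, Z⁆ Y - ω ⁅Y, Z⁆ X

/-- The exterior derivative of a 3-form. -/
def dThree (H : Derivation ℂ R R → Derivation ℂ R R → Derivation ℂ R R → R) :
    Derivation ℂ R R → Derivation ℂ R R → Derivation ℂ R R → Derivation ℂ R R → R :=
  fun X Y Z W =>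
    X (H Y Z W) - Y (H X Z W) + Z (H X Y W) - W (H X Y Z)
      - H ⁅X, Y⁆ Z W + H ⁅X, Z⁆ Y W - H ⁅X, W⁆ Y Z
      - H ⁅Y, Z⁆ X W + H ⁅Y, W⁆ X Z - H ⁅Z, W⁆ X Y

/-- The graph map of `−iω₊`: `X ↦ i_X(−iω₊)`, so `ℓ₊ = {(X, grd ω X) : X ∈ T^{1,0}_+}`. -/
def grd (ω : Derivation ℂ R R → Derivation ℂ R R → R) (X : Derivation ℂ R R) :
    Derivation ℂ R R → R := fun Z => -(algebraMap ℂ R Complex.I * ω X Z)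

lemma deriv_neg_i_mul (X : Derivation ℂ R R) (f : R) :
    X (-(algebraMap ℂ R Complex.I * f)) = -(algebraMap ℂ R Complex.I * X f) := by
  rw [map_neg, Derivation.leibniz, Derivation.map_algebraMap]
  simp [smul_eq_mul]

/-- `ℓ₊ = {X − iω₊X : X ∈ T^{1,0}_+}` is involutive for the `H`-twisted
Courant bracket iff `H(X,Y,·) = −i (dω₊)(X,Y,·)` for all `X, Y ∈ T^{1,0}_+`, i.e.
`H^{(2,1)_+} = −i ∂₊ ω₊`, equivalently `d^c_+ ω₊ = H`. -/
theorem ell_plus_involutive_iff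
    (V10 : Submodule R (Derivation ℂ R R))
    -- integrability of I₊: T^{1,0}_+ is closed under the Lie bracket
    (hV10 : ∀ X ∈ V10, ∀ Y ∈ V10, ⁅X, Y⁆ ∈ V10)
    (ω : Derivation ℂ R R → Derivation ℂ R R → R)
    (hωalt : ∀ u v, ω u v = -ω v u)
    (H : Derivation ℂ R R → Derivation ℂ R R → Derivation ℂ R R → R)
    (hHalt : ∀ X Y Z, H X Y Z = -(H Y X Z))
    (hHalt' : ∀ X Y Z, H X Y Z = -(H X Z Y))
    -- H is closed
    (hHcl : ∀ X Y Z W, dThree H X Y Z W = 0) :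
    (∀ X ∈ V10, ∀ Y ∈ V10, ∃ W ∈ V10,
        courantH H (X, grd ω X) (Y, grd ω Y) = (W, grd ω W)) ↔
    (∀ X ∈ V10, ∀ Y ∈ V10, ∀ Z,
        H X Y Z = -(algebraMap ℂ R Complex.I * dTwo ω X Y Z)) := by
  constructor
  · intro h X hX Y hY Z
    obtain ⟨W, hW, hEq⟩ := h X hX Y hY
    have h1 : ⁅X, Y⁆ = W := congrArg Prod.fst hEq
    subst h1
    have h2 := congrFun (congrArg Prod.snd hEq) Z
    simp only [courantH, grd] at h2
    rw [deriv_neg_i_mul, deriv_neg_i_mul, deriv_neg_i_mul] at h2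
    simp only [dTwo]
    linear_combination -h2 + hHalt X Y Z
      + algebraMap ℂ R Complex.I * (hωalt ⁅X, Z⁆ Y)
      - algebraMap ℂ R Complex.I * (hωalt ⁅Y, Z⁆ X)
  · intro h X hX Y hY
    refine ⟨⁅X, Y⁆, hV10 X hX Y hY, ?_⟩
    refine Prod.ext rfl ?_
    funext Z
    simp only [courantH, grd]
    rw [deriv_neg_i_mul, deriv_neg_i_mul, deriv_neg_i_mul]
    have h2 := h X hX Y hY Z
    simp only [dTwo] at h2
    linear_combination -h2 + hHalt Y X Z
      + algebraMap ℂ R Complex.I * (hωalt Y ⁅X, Z⁆)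
      - algebraMap ℂ R Complex.I * (hωalt X ⁅Y, Z⁆)
end
end

section
/- Let E₁, E₂ be exact Courant algebroids over M and D₁ ⊆ E₁, D₂ ⊆ E₂ Dirac structures that are transverse over TM (π₁(D₁) + π₂(D₂) = TM). Then, at the level of linear algebra at each point, the Baer sum D₁ ⊠ D₂ := ((D₁ ⊕_{TM} D₂) + K)/K, where K = {(−π₁*ξ, π₂*ξ) : ξ ∈ T*M}, is a maximal isotropic subspace of the Baer sum E₁ ⊠ E₂ = (E₁ ⊕_{TM} E₂)/K. -/
/- Pointwise Baer sum of Dirac structures.  `E₁, E₂` are fibres of exact Courant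
algebroids over the tangent fibre `V`: extensions `0 → V* → Eᵢ → V → 0` with symmetric
pairings for which `V*` is isotropic and pairs canonically with `Eᵢ/V* ≅ V`.
`D₁ ⊆ E₁`, `D₂ ⊆ E₂` are maximal isotropic (isotropic and containing their orthogonal)
and transverse over `V`: `π₁(D₁) + π₂(D₂) = V`.  The Baer sum
`D₁ ⊠ D₂ = ((D₁ ⊕_V D₂) + K)/K`, with `K = {(−ι₁ξ, ι₂ξ)}`, is represented by the subset
`S ⊆ E₁ ⊕_V E₂`; the claim is that `S` is isotropic and its image in the quotient
`(E₁ ⊕_V E₂)/K` is maximal isotropic, i.e. any element of the fibre product orthogonal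
to all of `S` already lies in `S`. -/

noncomputable section

theorem baer_sum_of_transverse_dirac_is_maximal_isotropic
    {V E₁ E₂ : Type*} [AddCommGroup V] [Module ℝ V]
    [AddCommGroup E₁] [Module ℝ E₁] [AddCommGroup E₂] [Module ℝ E₂]
    (ι₁ : Module.Dual ℝ V →ₗ[ℝ] E₁) (π₁ : E₁ →ₗ[ℝ] V)
    (ι₂ : Module.Dual ℝ V →ₗ[ℝ] E₂) (π₂ : E₂ →ₗ[ℝ] V)
    (p₁ : E₁ →ₗ[ℝ] E₁ →ₗ[ℝ] ℝ) (p₂ : E₂ →ₗ[ℝ] E₂ →ₗ[ℝ] ℝ)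
    (h₁sym : ∀ a b, p₁ a b = p₁ b a) (h₂sym : ∀ a b, p₂ a b = p₂ b a)
    (h₁nondeg : ∀ e, (∀ f, p₁ e f = 0) → e = 0)
    (h₂nondeg : ∀ e, (∀ f, p₂ e f = 0) → e = 0)
    (h₁surj : Function.Surjective π₁) (h₂surj : Function.Surjective π₂)
    (h₁exact : ∀ e, π₁ e = 0 ↔ ∃ ξ, e = ι₁ ξ)
    (h₂exact : ∀ e, π₂ e = 0 ↔ ∃ ξ, e = ι₂ ξ)
    (h₁pair : ∀ ξ e, p₁ (ι₁ ξ) e = (1/2) * ξ (π₁ e))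
    (h₂pair : ∀ ξ e, p₂ (ι₂ ξ) e = (1/2) * ξ (π₂ e))
    (D₁ : Submodule ℝ E₁) (D₂ : Submodule ℝ E₂)
    (h₁iso : ∀ a ∈ D₁, ∀ b ∈ D₁, p₁ a b = 0)
    (h₂iso : ∀ a ∈ D₂, ∀ b ∈ D₂, p₂ a b = 0)
    (h₁max : ∀ e, (∀ d ∈ D₁, p₁ e d = 0) → e ∈ D₁)
    (h₂max : ∀ e, (∀ d ∈ D₂, p₂ e d = 0) → e ∈ D₂)
    -- transversality over V: π₁(D₁) + π₂(D₂) = V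
    (htrans : ∀ v : V, ∃ d₁ ∈ D₁, ∃ d₂ ∈ D₂, π₁ d₁ + π₂ d₂ = v)
    -- S represents the Baer sum ((D₁ ⊕_V D₂) + K)/K inside the fibre product
    (S : Set (E₁ × E₂))
    (hS : S = {w | ∃ d₁ ∈ D₁, ∃ d₂ ∈ D₂, ∃ ξ : Module.Dual ℝ V,
        π₁ d₁ = π₂ d₂ ∧ w = (d₁ - ι₁ ξ, d₂ + ι₂ ξ)}) :
    -- S is isotropic for the sum pairing
    (∀ v ∈ S, ∀ w ∈ S, p₁ v.1 w.1 + p₂ v.2 w.2 = 0) ∧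
    -- and maximal among isotropics of the quotient (E₁ ⊕_V E₂)/K
    (∀ v : E₁ × E₂, π₁ v.1 = π₂ v.2 →
      (∀ w ∈ S, p₁ v.1 w.1 + p₂ v.2 w.2 = 0) → v ∈ S) := by

  subst hS
  have hπι₁ : ∀ ξ, π₁ (ι₁ ξ) = 0 := fun ξ => (h₁exact _).mpr ⟨ξ, rfl⟩
  have hπι₂ : ∀ ξ, π₂ (ι₂ ξ) = 0 := fun ξ => (h₂exact _).mpr ⟨ξ, rfl⟩
  constructor
  · rintro v ⟨d₁, hd₁, d₂, hd₂, ξ, hπ, rfl⟩ w ⟨e₁, he₁, e₂, he₂, η, hπ', rfl⟩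
    have h11 : p₁ d₁ e₁ = 0 := h₁iso _ hd₁ _ he₁
    have h22 : p₂ d₂ e₂ = 0 := h₂iso _ hd₂ _ he₂
    have t1 : p₁ (ι₁ ξ) (ι₁ η) = 0 := by rw [h₁pair, hπι₁]; simp
    have t2 : p₂ (ι₂ ξ) (ι₂ η) = 0 := by rw [h₂pair, hπι₂]; simp
    have a1 : p₁ d₁ (ι₁ η) = (1/2) * η (π₁ d₁) := by rw [h₁sym, h₁pair]
    have a2 : p₁ (ι₁ ξ) e₁ = (1/2) * ξ (π₁ e₁) := h₁pair ξ e₁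
    have b1 : p₂ d₂ (ι₂ η) = (1/2) * η (π₂ d₂) := by rw [h₂sym, h₂pair]
    have b2 : p₂ (ι₂ ξ) e₂ = (1/2) * ξ (π₂ e₂) := h₂pair ξ e₂
    simp only [map_sub, map_add, LinearMap.sub_apply, LinearMap.add_apply]
    rw [h11, h22, t1, t2, a1, a2, b1, b2, hπ, hπ']
    ring
  · rintro ⟨v₁, v₂⟩ hv horth
    have key : ∀ d₁ ∈ D₁, ∀ d₂ ∈ D₂, π₁ d₁ = π₂ d₂ → p₁ v₁ d₁ + p₂ v₂ d₂ = 0 := by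
      intro d₁ hd₁ d₂ hd₂ h
      have := horth (d₁, d₂) ⟨d₁, hd₁, d₂, hd₂, 0, h, by simp⟩
      simpa using this
    set Φ : (D₁ × D₂) →ₗ[ℝ] V :=
      (π₁.comp D₁.subtype).comp (LinearMap.fst ℝ D₁ D₂)
        + (π₂.comp D₂.subtype).comp (LinearMap.snd ℝ D₁ D₂) with hΦdef
    set F : (D₁ × D₂) →ₗ[ℝ] ℝ :=
      (-2 : ℝ) • ((p₁ v₁).comp (D₁.subtype.comp (LinearMap.fst ℝ D₁ D₂)))
        + (2 : ℝ) • ((p₂ v₂).comp (D₂.subtype.comp (LinearMap.snd ℝ D₁ D₂))) with hFdef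
    have hΦapp : ∀ x : D₁ × D₂, Φ x = π₁ x.1.1 + π₂ x.2.1 := by
      intro x; simp [hΦdef]
    have hFapp : ∀ x : D₁ × D₂, F x = -2 * p₁ v₁ x.1.1 + 2 * p₂ v₂ x.2.1 := by
      intro x; simp [hFdef]; try ring
    have hΦsurj : Function.Surjective Φ := by
      intro v
      obtain ⟨d₁, hd₁, d₂, hd₂, h⟩ := htrans v
      exact ⟨(⟨d₁, hd₁⟩, ⟨d₂, hd₂⟩), by rw [hΦapp]; exact h⟩
    have hker : LinearMap.ker Φ ≤ LinearMap.ker F := by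
      rintro ⟨⟨d₁, hd₁⟩, ⟨d₂, hd₂⟩⟩ h
      have hΦ0 : π₁ d₁ + π₂ d₂ = 0 := by
        have := LinearMap.mem_ker.mp h; rwa [hΦapp] at this
      have h' : π₁ d₁ = π₂ (-d₂) := by
        rw [map_neg]; exact eq_neg_of_add_eq_zero_left hΦ0
      have hk := key d₁ hd₁ (-d₂) (D₂.neg_mem hd₂) h'
      rw [map_neg] at hk
      have heq : p₁ v₁ d₁ = p₂ v₂ d₂ := by
        have := hk; linarith
      rw [LinearMap.mem_ker, hFapp]
      simp; linarith
    set e := Φ.quotKerEquivOfSurjective hΦsurj with hedef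
    set ξ : Module.Dual ℝ V :=
      (Submodule.liftQ (LinearMap.ker Φ) F hker).comp (e.symm : V →ₗ[ℝ] _) with hξdef
    have hemk : ∀ x : D₁ × D₂, e (Submodule.Quotient.mk x) = Φ x := by
      intro x; rfl
    have hξΦ : ∀ x : D₁ × D₂, ξ (Φ x) = F x := by
      intro x
      have h1 : e.symm (Φ x) = Submodule.Quotient.mk x := by
        apply e.injective; rw [LinearEquiv.apply_symm_apply, hemk]
      simp only [hξdef, LinearMap.comp_apply, LinearEquiv.coe_coe, h1]
      exact Submodule.liftQ_apply _ F x
    have hξ₁ : ∀ d₁ ∈ D₁, ξ (π₁ d₁) = -2 * p₁ v₁ d₁ := by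
      intro d₁ hd₁
      have := hξΦ (⟨d₁, hd₁⟩, 0)
      rw [hΦapp, hFapp] at this
      simpa using this
    have hξ₂ : ∀ d₂ ∈ D₂, ξ (π₂ d₂) = 2 * p₂ v₂ d₂ := by
      intro d₂ hd₂
      have := hξΦ (0, ⟨d₂, hd₂⟩)
      rw [hΦapp, hFapp] at this
      simpa using this
    have hmem₁ : v₁ + ι₁ ξ ∈ D₁ := by
      apply h₁max
      intro d hd
      have := h₁pair ξ d
      rw [map_add, LinearMap.add_apply, this, hξ₁ d hd]
      ring
    have hmem₂ : v₂ - ι₂ ξ ∈ D₂ := by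
      apply h₂max
      intro d hd
      have := h₂pair ξ d
      rw [map_sub, LinearMap.sub_apply, this, hξ₂ d hd]
      ring
    refine ⟨v₁ + ι₁ ξ, hmem₁, v₂ - ι₂ ξ, hmem₂, ξ, ?_, by simp⟩
    simp [hπι₁, hπι₂, hv]
end
end
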